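/- Let G be the structure on finite words over the alphabet Σ of two-element substructures of K, defined by: vertices are nonempty finite words W over Σ such that for all i < j < |W| the structure induced by W_i on {1} equals that induced by W_j on {1}; and for vertices U, V with |U| < |V| satisfying that △(U_i, V_{|U|}, V_i) is defined and embeds into K for all i < |U|, the map 0↦U, 1↦V is an embedding of V_{|U|} into G (and G has no other tuples in its relations). Then every induced cycle in G has a completion to K. -/

import Mathlib

/-- A structure in a relational language with unary symbols `L1` and binary symbols `L2`,
on vertex set `V`. -/
structure Str (L1 L2 V : Type) where
  unary : L1 → V → Prop
  rel : L2 → V → V → Prop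

namespace Str

variable {L1 L2 V W : Type}

/-- Two distinct vertices are adjacent if some binary relation holds between them
in either order. -/
def Adj (A : Str L1 L2 V) (x y : V) : Prop :=
  x ≠ y ∧ ∃ r, A.rel r x y ∨ A.rel r y x

/-- The substructure induced on a set of vertices. -/
def Induced (A : Str L1 L2 V) (S : Set V) : Str L1 L2 S where
  unary r x := A.unary r x.1
  rel r x y := A.rel r x.1 y.1

/-- Homomorphism of structures. -/
def IsHom (A : Str L1 L2 V) (B : Str L1 L2 W) (f : V → W) : Prop :=
  (∀ r x, A.unary r x → B.unary r (f x)) ∧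
  (∀ r x y, A.rel r x y → B.rel r (f x) (f y))

/-- Embedding of structures. -/
def IsEmb (A : Str L1 L2 V) (B : Str L1 L2 W) (f : V → W) : Prop :=
  Function.Injective f ∧
  (∀ r x, A.unary r x ↔ B.unary r (f x)) ∧
  (∀ r x y, A.rel r x y ↔ B.rel r (f x) (f y))

/-- A structure is irreducible if any two distinct vertices are adjacent. -/
def Irred (A : Str L1 L2 V) : Prop :=
  ∀ x y : V, x ≠ y → A.Adj x y

/-- A homomorphism-embedding: a homomorphism whose restriction to every irreducible
substructure is an embedding. -/
def IsHomEmb (A : Str L1 L2 V) (B : Str L1 L2 W) (f : V → W) : Prop :=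
  A.IsHom B f ∧
  ∀ S : Set V, (A.Induced S).Irred → (A.Induced S).IsEmb B (fun x => f x.1)

/-- A (strong) completion of `A` to `K`: an injective homomorphism-embedding into the
irreducible structure `K`. -/
def IsCompletion (A : Str L1 L2 V) (K : Str L1 L2 W) (f : V → W) : Prop :=
  K.Irred ∧ Function.Injective f ∧ A.IsHomEmb K f

/-- A cycle: a cyclic sequence of `ℓ ≥ 3` distinct vertices with consecutive vertices
adjacent. -/
def IsCycle (A : Str L1 L2 V) (ℓ : ℕ) (v : ZMod ℓ → V) : Prop :=
  3 ≤ ℓ ∧ Function.Injective v ∧ ∀ i, A.Adj (v i) (v (i + 1))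

/-- An induced cycle: no adjacencies other than the consecutive ones. -/
def IsInducedCycle (A : Str L1 L2 V) (ℓ : ℕ) (v : ZMod ℓ → V) : Prop :=
  A.IsCycle ℓ v ∧
  ∀ i j, i ≠ j → j ≠ i + 1 → i ≠ j + 1 → ¬ A.Adj (v i) (v j)

/-- Every induced cycle of `A` (seen as a substructure) has a completion to `K`. -/
def CycleCompletes (A : Str L1 L2 V) (K : Str L1 L2 W) : Prop :=
  ∀ (ℓ : ℕ) (v : ZMod ℓ → V), A.IsInducedCycle ℓ v →
    ∃ f : Set.range v → W, (A.Induced (Set.range v)).IsCompletion K f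

/-- Every irreducible substructure of `A` of size at most `c` embeds into `K`. -/
def SmallIrredEmbed (A : Str L1 L2 V) (K : Str L1 L2 W) (c : ℕ) : Prop :=
  ∀ S : Set V, S.Finite → S.ncard ≤ c → (A.Induced S).Irred →
    ∃ f : S → W, (A.Induced S).IsEmb K f

end Str

/-- The hypothesis of Theorem 1: every countable structure `A` has a completion to `K`
provided every induced cycle of `A` completes to `K` and every irreducible substructure
of `A` of size at most 2 embeds into `K`. -/
def CompletionHyp {L1 L2 W : Type} (K : Str L1 L2 W) : Prop :=
  ∀ (V : Type) [Countable V] (A : Str L1 L2 V),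
    A.CycleCompletes K → A.SmallIrredEmbed K 2 →
      ∃ f : V → W, A.IsCompletion K f

/-- `D` is the triangle structure `△(A,B,C)`: `0↦0,1↦1` embeds `A`, `0↦1,1↦2` embeds `B`
and `0↦0,1↦2` embeds `C`. -/
def IsTri {L1 L2 : Type} (A B C : Str L1 L2 (Fin 2)) (D : Str L1 L2 (Fin 3)) : Prop :=
  A.IsEmb D ![0, 1] ∧ B.IsEmb D ![1, 2] ∧ C.IsEmb D ![0, 2]

/-- The alphabet `Σ`: two-element structures embedding into `K`. -/
def Sig {L1 L2 W : Type} (K : Str L1 L2 W) : Type :=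
  {A : Str L1 L2 (Fin 2) // ∃ f : Fin 2 → W, A.IsEmb K f}

/-- Condition (A1): all letters of the word induce the same structure on `{1}`. -/
def A1cond {L1 L2 W : Type} {K : Str L1 L2 W} (U : List (Sig K)) : Prop :=
  ∀ (i j : ℕ) (hi : i < U.length) (hj : j < U.length),
    (∀ r, (U.get ⟨i, hi⟩).1.unary r 1 ↔ (U.get ⟨j, hj⟩).1.unary r 1) ∧
    (∀ r, (U.get ⟨i, hi⟩).1.rel r 1 1 ↔ (U.get ⟨j, hj⟩).1.rel r 1 1)

/-- Vertices of `G`: nonempty finite words over `Σ` satisfying (A1). -/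
def GVert {L1 L2 W : Type} (K : Str L1 L2 W) : Type :=
  {U : List (Sig K) // U ≠ [] ∧ A1cond U}

/-- Condition (A2): for all `i < |U|`, the triangle `△(U_i, V_{|U|}, V_i)` is defined and
embeds into `K`. -/
def GTri {L1 L2 W : Type} (K : Str L1 L2 W) (U V : GVert K)
    (h : U.1.length < V.1.length) : Prop :=
  ∀ (i : ℕ) (hi : i < U.1.length),
    ∃ D : Str L1 L2 (Fin 3),
      IsTri (U.1.get ⟨i, hi⟩).1 (V.1.get ⟨U.1.length, h⟩).1 (V.1.get ⟨i, hi.trans h⟩).1 D ∧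
      ∃ f : Fin 3 → W, D.IsEmb K f

/-- The structure `G`: whenever `|U| < |V|` and (A2) holds, the map `0 ↦ U, 1 ↦ V` is an
embedding of the two-element structure `V_{|U|}` into `G`; there are no other tuples. -/
def Gstr {L1 L2 W : Type} (K : Str L1 L2 W) : Str L1 L2 (GVert K) where
  unary r U :=
    (∃ V, ∃ h : U.1.length < V.1.length,
      GTri K U V h ∧ (V.1.get ⟨U.1.length, h⟩).1.unary r 0) ∨
    (∃ V, ∃ h : V.1.length < U.1.length,
      GTri K V U h ∧ (U.1.get ⟨V.1.length, h⟩).1.unary r 1)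
  rel r U V :=
    (∃ h : U.1.length < V.1.length,
      GTri K U V h ∧ (V.1.get ⟨U.1.length, h⟩).1.rel r 0 1) ∨
    (∃ h : V.1.length < U.1.length,
      GTri K V U h ∧ (U.1.get ⟨V.1.length, h⟩).1.rel r 1 0) ∨
    (U = V ∧
      ((∃ Q, ∃ h : U.1.length < Q.1.length,
          GTri K U Q h ∧ (Q.1.get ⟨U.1.length, h⟩).1.rel r 0 0) ∨
       (∃ Q, ∃ h : Q.1.length < U.1.length,
          GTri K Q U h ∧ (U.1.get ⟨Q.1.length, h⟩).1.rel r 1 1)))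


/-!
Let `v` be an induced cycle of `G` and `m` the least length of a word on it. Add to the cycle a
chord `U — V`, carrying the letter `V_m`, whenever `|U| = m < |V|`. On the edges of `v` this
changes nothing, since a `G`-edge `U — V` with `|U| = m` already carries `V_m`; and by (A2) the
point `0` of `V_m` has the same type for every `V` on the cycle, namely the type of the words of
length `m`. So it suffices to complete the chorded cycle, and for that the hypothesis on `K`
applies once its induced cycles complete.

An induced cycle of the chorded structure passes through a word of length `m`: otherwise it is a
cycle of `G` inside the induced cycle `v`, hence all of `v`. Such a word is adjacent exactly to
the longer words, so the induced cycle is a triangle `z a b` with `a — b` an edge of `G`, realised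
in `K` by the triangle `△(a_m, b_{|a|}, b_m)` of (A2), or a square `z a z' b` with
`|z| = |z'| = m`. A square is realised in `K` by applying the hypothesis to two one-point
extensions of `K`: the first glues `a_m` and `b_m` along their point `0`, the second adds a twin
of that point.
-/

namespace Str

variable {L1 L2 T U V W : Type}

/-- `A.comap ![x, y]` is the structure `A` induces on the pair `(x, y)`; letters of `Σ` are
compared with pairs of points in this form. -/
@[simps]
def comap (A : Str L1 L2 V) (f : U → V) : Str L1 L2 U where
  unary r x := A.unary r (f x)
  rel r x y := A.rel r (f x) (f y)

@[ext]
theorem ext {A B : Str L1 L2 V} (hu : ∀ r x, A.unary r x ↔ B.unary r x)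
    (hr : ∀ r x y, A.rel r x y ↔ B.rel r x y) : A = B := by
  cases A; cases B
  congr
  · funext r x; exact propext (hu r x)
  · funext r x y; exact propext (hr r x y)

theorem comap_comap (A : Str L1 L2 V) (g : U → V) (f : T → U) :
    (A.comap g).comap f = A.comap (g ∘ f) := rfl

theorem comap_comap_single (A : Str L1 L2 V) (g : U → V) (x : U) :
    (A.comap g).comap ![x] = A.comap ![g x] := by
  ext r i j <;> fin_cases i <;> try fin_cases j
  all_goals rfl

theorem comap_comap_pair (A : Str L1 L2 V) (g : U → V) (x y : U) :
    (A.comap g).comap ![x, y] = A.comap ![g x, g y] := by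
  ext r i j <;> fin_cases i <;> try fin_cases j
  all_goals rfl

theorem comap_pair_zero (A : Str L1 L2 V) (x y : V) :
    (A.comap ![x, y]).comap ![0] = A.comap ![x] := by
  ext r i j <;> fin_cases i <;> try fin_cases j
  all_goals rfl

theorem comap_pair_one (A : Str L1 L2 V) (x y : V) :
    (A.comap ![x, y]).comap ![1] = A.comap ![y] := by
  ext r i j <;> fin_cases i <;> try fin_cases j
  all_goals rfl

theorem comap_pair_swap (A : Str L1 L2 V) (x y : V) :
    A.comap ![y, x] = (A.comap ![x, y]).comap ![1, 0] := by
  ext r i j <;> fin_cases i <;> try fin_cases j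
  all_goals rfl

theorem comap_zero_one (L : Str L1 L2 (Fin 2)) : L.comap ![0, 1] = L := by
  ext r i j <;> fin_cases i <;> try fin_cases j
  all_goals rfl

theorem comap_swap_swap (L : Str L1 L2 (Fin 2)) : (L.comap ![1, 0]).comap ![1, 0] = L := by
  ext r i j <;> fin_cases i <;> try fin_cases j
  all_goals rfl

theorem comap_swap_eq {A : Str L1 L2 V} {B : Str L1 L2 W} {x y : V} {x' y' : W}
    (h : A.comap ![x, y] = B.comap ![x', y']) : A.comap ![y, x] = B.comap ![y', x'] := by
  rw [comap_pair_swap, h, ← comap_pair_swap]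

theorem unary_iff_of_comap_eq {A : Str L1 L2 V} {B : Str L1 L2 W} {f : U → V} {g : U → W}
    (h : A.comap f = B.comap g) (r : L1) (x : U) : A.unary r (f x) ↔ B.unary r (g x) := by
  change (A.comap f).unary r x ↔ (B.comap g).unary r x
  rw [h]

theorem rel_iff_of_comap_eq {A : Str L1 L2 V} {B : Str L1 L2 W} {f : U → V} {g : U → W}
    (h : A.comap f = B.comap g) (r : L2) (x y : U) :
    A.rel r (f x) (f y) ↔ B.rel r (g x) (g y) := by
  change (A.comap f).rel r x y ↔ (B.comap g).rel r x y
  rw [h]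

theorem ext_pair {A B : Str L1 L2 (Fin 2)} (h0 : A.comap ![0] = B.comap ![0])
    (h1 : A.comap ![1] = B.comap ![1]) (h01 : ∀ r, A.rel r 0 1 ↔ B.rel r 0 1)
    (h10 : ∀ r, A.rel r 1 0 ↔ B.rel r 1 0) : A = B := by
  ext r i j <;> fin_cases i <;> try fin_cases j
  exacts [unary_iff_of_comap_eq h0 r 0, unary_iff_of_comap_eq h1 r 0,
    rel_iff_of_comap_eq h0 r 0 0, h01 r, h10 r, rel_iff_of_comap_eq h1 r 0 0]

theorem Adj.symm {A : Str L1 L2 V} {x y : V} (h : A.Adj x y) : A.Adj y x :=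
  ⟨h.1.symm, h.2.imp fun _ => Or.symm⟩

theorem adj_comap_iff {A : Str L1 L2 V} {f : U → V} (hf : Function.Injective f) {x y : U} :
    (A.comap f).Adj x y ↔ A.Adj (f x) (f y) :=
  and_congr hf.ne_iff.symm Iff.rfl

theorem isEmb_iff {A : Str L1 L2 V} {B : Str L1 L2 W} {f : V → W} :
    A.IsEmb B f ↔ Function.Injective f ∧ B.comap f = A := by
  constructor
  · rintro ⟨hf, hu, hr⟩
    exact ⟨hf, Str.ext (fun r x => (hu r x).symm) (fun r x y => (hr r x y).symm)⟩
  · rintro ⟨hf, rfl⟩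
    exact ⟨hf, fun _ _ => Iff.rfl, fun _ _ _ => Iff.rfl⟩

theorem IsEmb.comap {L : Str L1 L2 V} {K : Str L1 L2 W} {e : V → W} (he : L.IsEmb K e)
    {σ : U → V} (hσ : Function.Injective σ) : (L.comap σ).IsEmb K (e ∘ σ) := by
  rw [isEmb_iff] at he ⊢
  exact ⟨he.1.comp hσ, by rw [← comap_comap, he.2]⟩

theorem exists_isEmb_pair_swap {A : Str L1 L2 V} {K : Str L1 L2 W} {x y : V}
    (h : ∃ e : Fin 2 → W, (A.comap ![y, x]).IsEmb K e) :
    ∃ e : Fin 2 → W, (A.comap ![x, y]).IsEmb K e := by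
  obtain ⟨e, he⟩ := h
  rw [comap_pair_swap]
  exact ⟨_, he.comap (by decide)⟩

theorem IsEmb.exists_rel {L : Str L1 L2 (Fin 2)} {K : Str L1 L2 W} (hK : K.Irred)
    {e : Fin 2 → W} (he : L.IsEmb K e) : ∃ r, L.rel r 0 1 ∨ L.rel r 1 0 := by
  obtain ⟨-, r, h⟩ := hK (e 0) (e 1) (he.1.ne (by decide))
  exact ⟨r, h.imp (he.2.2 r 0 1).2 (he.2.2 r 1 0).2⟩

theorem isTri_iff {A B C : Str L1 L2 (Fin 2)} {D : Str L1 L2 (Fin 3)} :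
    IsTri A B C D ↔ D.comap ![0, 1] = A ∧ D.comap ![1, 2] = B ∧ D.comap ![0, 2] = C := by
  have h01 : Function.Injective (![0, 1] : Fin 2 → Fin 3) := by decide
  have h12 : Function.Injective (![1, 2] : Fin 2 → Fin 3) := by decide
  have h02 : Function.Injective (![0, 2] : Fin 2 → Fin 3) := by decide
  simp [IsTri, isEmb_iff, h01, h12, h02]

theorem exists_isEmb_induced_range {A : Str L1 L2 V} {K : Str L1 L2 W} {g : U → V}
    (hg : Function.Injective g) {e : U → W} (he : (A.comap g).IsEmb K e) :
    ∃ f : Set.range g → W, (A.Induced (Set.range g)).IsEmb K f := by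
  refine ⟨e ∘ (Equiv.ofInjective g hg).symm,
    isEmb_iff.2 ⟨he.1.comp (Equiv.injective _), ?_⟩⟩
  rw [← comap_comap, (isEmb_iff.1 he).2, comap_comap]
  ext r x y <;> simp [Induced]

theorem smallIrredEmbed_two {A : Str L1 L2 V} {K : Str L1 L2 W}
    (h1 : ∀ x, ∃ k, K.comap ![k] = A.comap ![x])
    (h2 : ∀ x y, A.Adj x y → ∃ e : Fin 2 → W, (A.comap ![x, y]).IsEmb K e) :
    A.SmallIrredEmbed K 2 := by
  intro S hS hcard hirr
  obtain h0 | h1' | h2' : S.ncard = 0 ∨ S.ncard = 1 ∨ S.ncard = 2 := by omega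
  · obtain rfl := (Set.ncard_eq_zero hS).1 h0
    exact ⟨fun x => x.2.elim, fun x => x.2.elim, fun _ x => x.2.elim, fun _ x => x.2.elim⟩
  · obtain ⟨x, rfl⟩ := Set.ncard_eq_one.1 h1'
    obtain ⟨k, hk⟩ := h1 x
    have := exists_isEmb_induced_range (A := A) (g := ![x]) (Function.injective_of_subsingleton _)
      (isEmb_iff.2 ⟨Function.injective_of_subsingleton _, hk⟩)
    rwa [Matrix.range_cons, Matrix.range_empty, Set.union_empty] at this
  · obtain ⟨x, y, hxy, rfl⟩ := Set.ncard_eq_two.1 h2'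
    have hadj : A.Adj x y :=
      ⟨hxy, (hirr ⟨x, by simp⟩ ⟨y, by simp⟩ (by simpa using hxy)).2⟩
    obtain ⟨e, he⟩ := h2 x y hadj
    have hinj : Function.Injective ![x, y] := by
      intro i j hij; fin_cases i <;> fin_cases j <;> simp_all [eq_comm]
    have := exists_isEmb_induced_range hinj he
    rwa [Matrix.range_cons, Matrix.range_cons, Matrix.range_empty, Set.union_empty,
      Set.singleton_union] at this

theorem isCompletion_of_exact {A : Str L1 L2 V} {K : Str L1 L2 W} {f : V → W} (hK : K.Irred)
    (hf : Function.Injective f) (hu : ∀ r x, A.unary r x ↔ K.unary r (f x))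
    (hr : ∀ r x y, (x = y ∨ A.Adj x y) → (A.rel r x y ↔ K.rel r (f x) (f y))) :
    A.IsCompletion K f := by
  have hhom : ∀ r x y, A.rel r x y → K.rel r (f x) (f y) := fun r x y h => by
    by_cases hxy : x = y
    · exact (hr r x y (Or.inl hxy)).1 h
    · exact (hr r x y (Or.inr ⟨hxy, r, Or.inl h⟩)).1 h
  refine ⟨hK, hf, ⟨fun r x => (hu r x).1, hhom⟩, fun S hS =>
    ⟨hf.comp Subtype.val_injective, fun r x => hu r x, fun r x y => hr r x y ?_⟩⟩
  by_cases hxy : x = y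
  · exact Or.inl (congrArg _ hxy)
  · exact Or.inr ⟨fun h => hxy (Subtype.ext h), (hS x y hxy).2⟩

theorem IsCompletion.comap_pair {A : Str L1 L2 V} {K : Str L1 L2 W} {f : V → W}
    (hf : A.IsCompletion K f) {x y : V} (h : A.Adj x y) :
    K.comap ![f x, f y] = A.comap ![x, y] := by
  have hirr : (A.Induced {x, y}).Irred := by
    rintro ⟨a, ha⟩ ⟨b, hb⟩ hab
    refine ⟨hab, ?_⟩
    simp only [Set.mem_insert_iff, Set.mem_singleton_iff] at ha hb
    rcases ha with rfl | rfl <;> rcases hb with rfl | rfl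
    exacts [(hab rfl).elim, h.2, h.symm.2, (hab rfl).elim]
  have := congrArg (comap · ![⟨x, by simp⟩, ⟨y, by simp⟩])
    (isEmb_iff.1 (hf.2.2.2 _ hirr)).2
  rw [comap_comap_pair] at this
  exact this.trans (comap_comap_pair A Subtype.val _ _)

end Str

theorem ZMod.forall_of_add_one {n : ℕ} [NeZero n] {P : ZMod n → Prop} {i₀ : ZMod n}
    (h₀ : P i₀) (h : ∀ i, P i → P (i + 1)) (i : ZMod n) : P i := by
  have key : ∀ k : ℕ, P (i₀ + k) := by
    intro k
    induction k with
    | zero => simpa using h₀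
    | succ k ih => simpa [add_assoc] using h _ ih
  simpa using key (i - i₀).val

theorem ZMod.natCast_ne_zero_of_lt {n k : ℕ} (h₀ : 0 < k) (hk : k < n) :
    (k : ZMod n) ≠ 0 := by
  rw [Ne, ZMod.natCast_eq_zero_iff]
  exact Nat.not_dvd_of_pos_of_lt h₀ hk

namespace Str.IsInducedCycle

variable {L1 L2 V W : Type} {A : Str L1 L2 V} {n : ℕ} {w : ZMod n → V}

theorem eq_add_one_or (hw : A.IsInducedCycle n w) {s t : ZMod n} (h : A.Adj (w s) (w t)) :
    t = s + 1 ∨ s = t + 1 := by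
  by_contra hc
  push Not at hc
  exact hw.2 s t (fun hst => h.1 (congrArg w hst)) hc.1 hc.2 h

theorem not_adj_add (hw : A.IsInducedCycle n w) {k : ℕ} (hk : 2 ≤ k) (hkn : k + 2 ≤ n)
    (t : ZMod n) : ¬ A.Adj (w t) (w (t + k)) := by
  refine hw.2 _ _ (fun h => ?_) (fun h => ?_) (fun h => ?_)
  · exact ZMod.natCast_ne_zero_of_lt (n := n) (k := k) (by omega) (by omega)
      (by linear_combination -h)
  · exact ZMod.natCast_ne_zero_of_lt (n := n) (k := k - 1) (by omega) (by omega)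
      (by rw [Nat.cast_sub (by omega)]; linear_combination h)
  · exact ZMod.natCast_ne_zero_of_lt (n := n) (k := k + 1) (by omega) (by omega)
      (by push_cast; linear_combination -h)

theorem exists_rotate (hw : A.IsInducedCycle n w) (t₀ : ZMod n) :
    ∃ w' : ZMod n → V,
      A.IsInducedCycle n w' ∧ Set.range w' = Set.range w ∧ w' 0 = w t₀ := by
  refine ⟨fun t => w (t₀ + t),
    ⟨⟨hw.1.1, hw.1.2.1.comp (add_right_injective t₀), fun t => ?_⟩,
      fun i j hij h1 h2 => ?_⟩,
    (Equiv.addLeft t₀).surjective.range_comp w, by simp⟩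
  · simpa only [add_assoc] using hw.1.2.2 (t₀ + t)
  · refine hw.2 _ _ (fun h => hij (add_left_cancel h)) (fun h => h1 ?_) (fun h => h2 ?_)
    · exact add_left_cancel (h.trans (add_assoc _ _ _))
    · exact add_left_cancel (h.trans (add_assoc _ _ _))

theorem range_subset_of_isCycle {ℓ : ℕ} {v : ZMod ℓ → V} (hv : A.IsInducedCycle ℓ v)
    (hw : A.IsCycle n w) (hsub : Set.range w ⊆ Set.range v) : Set.range v ⊆ Set.range w := by
  have : NeZero ℓ := ⟨by have := hv.1.1; omega⟩
  obtain ⟨i₀, hi₀⟩ := hsub ⟨0, rfl⟩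
  rintro _ ⟨i, rfl⟩
  refine ZMod.forall_of_add_one (P := fun i => v i ∈ Set.range w) ⟨0, hi₀.symm⟩ ?_ i
  rintro i ⟨t, ht⟩
  obtain ⟨j, hj⟩ := hsub ⟨t + 1, rfl⟩
  obtain ⟨k, hk⟩ := hsub ⟨t - 1, rfl⟩
  have hij : A.Adj (v i) (v j) := by rw [← ht, hj]; exact hw.2.2 t
  have hki : A.Adj (v k) (v i) := by rw [← ht, hk]; simpa using hw.2.2 (t - 1)
  rcases hv.eq_add_one_or hij with rfl | hij'
  · exact ⟨t + 1, hj.symm⟩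
  rcases hv.eq_add_one_or hki with hki' | rfl
  · -- the two neighbours of `w t` on `w` would both be `v (i - 1)`
    have hjk : j = k := add_right_cancel (hij'.symm.trans hki')
    have htt := hw.2.1 (hj.symm.trans ((congrArg v hjk).trans hk))
    exact absurd (by push_cast; linear_combination htt)
      (ZMod.natCast_ne_zero_of_lt (n := n) (k := 2) (by omega) (by have := hw.1; omega))
  · exact ⟨t - 1, hk.symm⟩

theorem exists_completion {K : Str L1 L2 W} (hK : K.Irred) (hw : A.IsInducedCycle n w)
    {ψ : ZMod n → W} (hψ : Function.Injective ψ)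
    (hpair : ∀ t, K.comap ![ψ t, ψ (t + 1)] = A.comap ![w t, w (t + 1)]) :
    ∃ f : Set.range w → W, (A.Induced (Set.range w)).IsCompletion K f := by
  set σ := (Equiv.ofInjective w hw.1.2.1).symm
  have hσ (t : ZMod n) : σ ⟨w t, ⟨t, rfl⟩⟩ = t := Equiv.ofInjective_symm_apply _ t
  refine ⟨ψ ∘ σ, isCompletion_of_exact hK (hψ.comp σ.injective) ?_ ?_⟩
  · rintro r ⟨_, t, rfl⟩
    change A.unary r (w t) ↔ K.unary r (ψ (σ _))
    rw [hσ]
    exact (unary_iff_of_comap_eq (hpair t) r 0).symm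
  · rintro r ⟨_, s, rfl⟩ ⟨_, t, rfl⟩ hst
    simp only [Function.comp_apply, hσ]
    rcases hst with hst | hst
    · obtain rfl : s = t := hw.1.2.1 (congrArg Subtype.val hst)
      exact (rel_iff_of_comap_eq (hpair s) r 0 0).symm
    rcases hw.eq_add_one_or (A := A) ⟨fun h => hst.1 (Subtype.ext h), hst.2⟩ with rfl | rfl
    · exact (rel_iff_of_comap_eq (hpair s) r 0 1).symm
    · exact (rel_iff_of_comap_eq (hpair t) r 1 0).symm

end Str.IsInducedCycle

namespace Str

variable {L1 L2 W : Type}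

/-- The new point is `none`; it is the point `0` of each letter `T u`. -/
def addPoint (K : Str L1 L2 W) (X : Str L1 L2 (Fin 1)) (N : Set W)
    (T : W → Str L1 L2 (Fin 2)) : Str L1 L2 (Option W) where
  unary r x := x.elim (X.unary r 0) (K.unary r)
  rel r x y := match x, y with
    | some u, some u' => K.rel r u u'
    | none, some u => u ∈ N ∧ (T u).rel r 0 1
    | some u, none => u ∈ N ∧ (T u).rel r 1 0
    | none, none => X.rel r 0 0

section addPoint

variable {K : Str L1 L2 W} {X : Str L1 L2 (Fin 1)} {N : Set W} {T : W → Str L1 L2 (Fin 2)}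

theorem addPoint_comap_some (u u' : W) :
    (K.addPoint X N T).comap ![some u, some u'] = K.comap ![u, u'] := by
  ext r i j <;> fin_cases i <;> try fin_cases j
  all_goals rfl

theorem addPoint_comap_none : (K.addPoint X N T).comap ![none] = X := by
  ext r i j <;> fin_cases i <;> try fin_cases j
  all_goals rfl

theorem addPoint_comap_none_some {u : W} (hu : u ∈ N) (hX : (T u).comap ![0] = X)
    (hT : (T u).comap ![1] = K.comap ![u]) :
    (K.addPoint X N T).comap ![none, some u] = T u := by
  subst hX
  ext r i j <;> fin_cases i <;> try fin_cases j
  · exact Iff.rfl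
  · exact (unary_iff_of_comap_eq hT r 0).symm
  · exact Iff.rfl
  · exact and_iff_right hu
  · exact and_iff_right hu
  · exact (rel_iff_of_comap_eq hT r 0 0).symm

theorem mem_of_addPoint_adj {u : W} (h : (K.addPoint X N T).Adj none (some u)) : u ∈ N := by
  obtain ⟨-, r, h | h⟩ := h
  exacts [h.1, h.1]

theorem addPoint_smallIrredEmbed (hT : ∀ u ∈ N, ∃ e, (T u).IsEmb K e)
    (hX : ∀ u ∈ N, (T u).comap ![0] = X) (hT1 : ∀ u ∈ N, (T u).comap ![1] = K.comap ![u])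
    (hN : N.Nonempty) : (K.addPoint X N T).SmallIrredEmbed K 2 := by
  refine smallIrredEmbed_two (fun x => ?_) (fun x y hxy => ?_)
  · cases x with
    | none =>
      obtain ⟨u, hu⟩ := hN
      obtain ⟨e, he⟩ := hT u hu
      refine ⟨e 0, ?_⟩
      rw [addPoint_comap_none, ← hX u hu, ← (isEmb_iff.1 he).2, comap_comap_single]
    | some u => exact ⟨u, by ext r i j <;> fin_cases i <;> (try fin_cases j) <;> rfl⟩
  cases x with
  | none =>
    cases y with
    | none => exact (hxy.1 rfl).elim
    | some u =>
      have hu := mem_of_addPoint_adj hxy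
      rw [addPoint_comap_none_some hu (hX u hu) (hT1 u hu)]
      exact hT u hu
  | some u =>
    cases y with
    | none =>
      have hu := mem_of_addPoint_adj hxy.symm
      refine exists_isEmb_pair_swap ?_
      rw [addPoint_comap_none_some hu (hX u hu) (hT1 u hu)]
      exact hT u hu
    | some u' =>
      refine ⟨![u, u'], isEmb_iff.2 ⟨?_, (addPoint_comap_some u u').symm⟩⟩
      have : u ≠ u' := fun h => hxy.1 (congrArg some h)
      intro i j hij; fin_cases i <;> fin_cases j <;> simp_all [eq_comm]

theorem addPoint_cycle_length (hK : K.Irred) {n : ℕ} {w : ZMod n → Option W}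
    (hw : (K.addPoint X N T).IsInducedCycle n w) (h0 : w 0 = none) : n = 3 := by
  by_contra hn
  have hn4 : 4 ≤ n := by have := hw.1.1; omega
  have hne (k : ℕ) (hk0 : 0 < k) (hk : k < n) : (k : ZMod n) ≠ 0 :=
    ZMod.natCast_ne_zero_of_lt hk0 hk
  have hsome (k : ℕ) (hk0 : 0 < k) (hk : k < n) : ∃ u, w k = some u :=
    Option.ne_none_iff_exists'.1 fun h => hne k hk0 hk (hw.1.2.1 (h.trans h0.symm))
  obtain ⟨u, hu⟩ := hsome 1 (by omega) (by omega)
  obtain ⟨u', hu'⟩ := hsome 3 (by omega) (by omega)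
  have huu' : u ≠ u' := by
    rintro rfl
    have h13 := hw.1.2.1 (hu.trans hu'.symm)
    exact hne 2 (by omega) (by omega) (by push_cast at h13 ⊢; linear_combination -h13)
  -- `w 1` and `w 3` are distinct points of the irreducible `K`, yet not adjacent
  have hnadj := hw.not_adj_add (k := 2) le_rfl (by omega) ((1 : ℕ) : ZMod n)
  rw [← Nat.cast_add, hu, hu'] at hnadj
  exact hnadj ⟨fun h => huu' (Option.some_injective _ h), (hK u u' huu').2⟩

theorem addPoint_cycleCompletes (hK : K.Irred) (hX : ∀ u ∈ N, (T u).comap ![0] = X)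
    (hT1 : ∀ u ∈ N, (T u).comap ![1] = K.comap ![u])
    (htri : ∀ u ∈ N, ∀ u' ∈ N, u ≠ u' →
      ∃ c, c ≠ u ∧ c ≠ u' ∧ K.comap ![c, u] = T u ∧ K.comap ![c, u'] = T u') :
    (K.addPoint X N T).CycleCompletes K := by
  intro n w hw
  by_cases hnone : none ∈ Set.range w
  swap
  · have : ∀ t, ∃ u, w t = some u :=
      fun t => Option.ne_none_iff_exists'.1 fun h => hnone ⟨t, h⟩
    choose ψ hψ using this
    exact hw.exists_completion (ψ := ψ) hK (fun s t h => hw.1.2.1 (by rw [hψ s, hψ t, h]))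
      fun t => by rw [hψ, hψ, addPoint_comap_some]
  obtain ⟨t₀, ht₀⟩ := hnone
  obtain ⟨w, hw, hrange, h0⟩ := hw.exists_rotate t₀
  rw [← hrange]
  rw [ht₀] at h0
  obtain rfl := addPoint_cycle_length hK hw h0
  have hsome (t : ZMod 3) (ht : t ≠ 0) : ∃ u, w t = some u :=
    Option.ne_none_iff_exists'.1 fun h => ht (hw.1.2.1 (h.trans h0.symm))
  obtain ⟨u₁, hu₁⟩ := hsome 1 (by decide)
  obtain ⟨u₂, hu₂⟩ := hsome 2 (by decide)
  have hN₁ : u₁ ∈ N := mem_of_addPoint_adj (by simpa [h0, hu₁] using hw.1.2.2 0)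
  have hN₂ : u₂ ∈ N := by
    have := (hw.1.2.2 2).symm
    rw [show (2 : ZMod 3) + 1 = 0 from rfl, h0, hu₂] at this
    exact mem_of_addPoint_adj this
  have hu₁₂ : u₁ ≠ u₂ :=
    fun h => absurd (hw.1.2.1 (hu₁.trans (h ▸ hu₂.symm))) (by decide)
  -- the triangle `none, u₁, u₂` is realised by `c, u₁, u₂`
  obtain ⟨c, hc₁, hc₂, hcu₁, hcu₂⟩ := htri u₁ hN₁ u₂ hN₂ hu₁₂
  refine hw.exists_completion (ψ := ![c, u₁, u₂]) hK ?_ fun t => ?_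
  · intro i j hij
    fin_cases i <;> fin_cases j <;> first | rfl | simp_all [eq_comm]
  fin_cases t
  · change K.comap ![c, u₁] = (K.addPoint X N T).comap ![w 0, w 1]
    rw [h0, hu₁, addPoint_comap_none_some hN₁ (hX _ hN₁) (hT1 _ hN₁), hcu₁]
  · change K.comap ![u₁, u₂] = (K.addPoint X N T).comap ![w 1, w 2]
    rw [hu₁, hu₂, addPoint_comap_some]
  · change K.comap ![u₂, c] = (K.addPoint X N T).comap ![w 2, w 0]
    rw [h0, hu₂, comap_pair_swap (K.addPoint X N T),
      addPoint_comap_none_some hN₂ (hX _ hN₂) (hT1 _ hN₂), ← hcu₂, ← comap_pair_swap]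

end addPoint

variable [Countable W] {K : Str L1 L2 W}

theorem exists_point_extension (hK : K.Irred) (hyp : CompletionHyp K)
    {X : Str L1 L2 (Fin 1)} {N : Set W} {T : W → Str L1 L2 (Fin 2)} (hN : N.Nonempty)
    (hT : ∀ u ∈ N, ∃ e, (T u).IsEmb K e) (hX : ∀ u ∈ N, (T u).comap ![0] = X)
    (hT1 : ∀ u ∈ N, (T u).comap ![1] = K.comap ![u])
    (htri : ∀ u ∈ N, ∀ u' ∈ N, u ≠ u' →
      ∃ c, c ≠ u ∧ c ≠ u' ∧ K.comap ![c, u] = T u ∧ K.comap ![c, u'] = T u') :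
    ∃ f : Option W → W, Function.Injective f ∧
      (∀ u u', u ≠ u' → K.comap ![f (some u), f (some u')] = K.comap ![u, u']) ∧
      ∀ u ∈ N, K.comap ![f none, f (some u)] = T u := by
  obtain ⟨f, hf⟩ := hyp _ _ (addPoint_cycleCompletes hK hX hT1 htri)
    (addPoint_smallIrredEmbed hT hX hT1 hN)
  refine ⟨f, hf.2.1, fun u u' h => ?_, fun u hu => ?_⟩
  · rw [hf.comap_pair ⟨fun h' => h (Option.some_injective _ h'), (hK u u' h).2⟩,
      addPoint_comap_some]
  · obtain ⟨r, hr⟩ := (hT u hu).choose_spec.exists_rel hK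
    rw [hf.comap_pair ⟨(Option.some_ne_none u).symm, r, hr.imp (⟨hu, ·⟩) (⟨hu, ·⟩)⟩,
      addPoint_comap_none_some hu (hX u hu) (hT1 u hu)]

theorem exists_glue (hK : K.Irred) (hyp : CompletionHyp K) {La Lb : Str L1 L2 (Fin 2)}
    (ha : ∃ e, La.IsEmb K e) (hb : ∃ e, Lb.IsEmb K e) (h0 : La.comap ![0] = Lb.comap ![0]) :
    ∃ p a b : W,
      p ≠ a ∧ p ≠ b ∧ a ≠ b ∧ K.comap ![p, a] = La ∧ K.comap ![p, b] = Lb := by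
  obtain ⟨e, he⟩ := ha
  obtain ⟨f, hf, hfK, hfN⟩ := exists_point_extension (N := {e 0})
    (T := fun _ => Lb.comap ![1, 0]) hK hyp (Set.singleton_nonempty _)
    (fun _ _ => ⟨_, hb.choose_spec.comap (by decide)⟩)
    (fun _ _ => comap_pair_zero _ _ _)
    (by rintro _ rfl; rw [comap_pair_one, ← h0, ← (isEmb_iff.1 he).2, comap_comap_single])
    (by rintro _ rfl _ rfl h; exact (h rfl).elim)
  refine ⟨f (some (e 0)), f (some (e 1)), f none, hf.ne (by simpa using he.1.ne (by decide)),
    hf.ne (Option.some_ne_none _), hf.ne (Option.some_ne_none _), ?_, ?_⟩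
  · rw [hfK _ _ (he.1.ne (by decide)), ← comap_comap_pair, (isEmb_iff.1 he).2, comap_zero_one]
  · rw [comap_pair_swap, hfN _ rfl, comap_swap_swap]

theorem exists_square (hK : K.Irred) (hyp : CompletionHyp K) {La Lb : Str L1 L2 (Fin 2)}
    (ha : ∃ e, La.IsEmb K e) (hb : ∃ e, Lb.IsEmb K e) (h0 : La.comap ![0] = Lb.comap ![0]) :
    ∃ ψ : Fin 4 → W, Function.Injective ψ ∧ K.comap ![ψ 0, ψ 1] = La ∧
      K.comap ![ψ 2, ψ 1] = La ∧ K.comap ![ψ 2, ψ 3] = Lb ∧ K.comap ![ψ 0, ψ 3] = Lb := by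
  classical
  obtain ⟨p, a, b, hpa', hpb', hab, hpa, hpb⟩ := exists_glue hK hyp ha hb h0
  -- `p` witnesses the triangle condition for a twin of `p` over `a` and `b`
  obtain ⟨g, hg, hgK, hgN⟩ := exists_point_extension (N := {a, b})
    (T := fun u => if u = a then La else Lb) (X := La.comap ![0]) hK hyp (Set.insert_nonempty _ _)
    (by rintro _ (rfl | rfl); exacts [by simpa using ha, by simpa [hab.symm] using hb])
    (by rintro _ (rfl | rfl); exacts [by simp, by simpa [hab.symm] using h0.symm])
    (by
      rintro _ (rfl | rfl)
      exacts [by rw [if_pos rfl, ← hpa, comap_pair_one],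
        by rw [if_neg hab.symm, ← hpb, comap_pair_one]])
    (by
      rintro _ (rfl | rfl) _ (rfl | rfl) h
      exacts [(h rfl).elim,
        ⟨p, hpa', hpb', by rw [if_pos rfl, hpa], by rw [if_neg h.symm, hpb]⟩,
        ⟨p, hpb', hpa', by rw [if_neg h, hpb], by rw [if_pos rfl, hpa]⟩, (h rfl).elim])
  refine ⟨g ∘ ![some p, some a, none, some b], hg.comp fun i j hij => ?_, ?_, ?_, ?_, ?_⟩
  · fin_cases i <;> fin_cases j <;>
      first | rfl | simp [hpa', hpb', hab, hpa'.symm, hpb'.symm, hab.symm] at hij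
  · exact (hgK _ _ hpa').trans hpa
  · exact (hgN a (by simp)).trans (if_pos rfl)
  · exact (hgN b (by simp)).trans (if_neg hab.symm)
  · exact (hgK _ _ hpb').trans hpb

end Str

open Str

namespace GVert

variable {L1 L2 W : Type} {K : Str L1 L2 W}

abbrev len (U : GVert K) : ℕ := U.1.length

def letter (U : GVert K) (i : ℕ) (h : i < U.len) : Str L1 L2 (Fin 2) :=
  (U.1.get ⟨i, h⟩).1

theorem len_pos (U : GVert K) : 0 < U.len :=
  List.length_pos_iff.mpr U.2.1

theorem letter_isEmb (U : GVert K) (i : ℕ) (h : i < U.len) : ∃ e, (U.letter i h).IsEmb K e :=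
  (U.1.get ⟨i, h⟩).2

/-- The common type of the second points of the letters of `U`, by condition (A1). -/
def vtype (U : GVert K) : Str L1 L2 (Fin 1) :=
  (U.letter 0 U.len_pos).comap ![1]

theorem letter_comap_one (U : GVert K) (i : ℕ) (h : i < U.len) :
    (U.letter i h).comap ![1] = U.vtype := by
  ext r x y <;> fin_cases x <;> try fin_cases y
  exacts [(U.2.2 i 0 h U.len_pos).1 r, (U.2.2 i 0 h U.len_pos).2 r]

variable {U V : GVert K} {h : U.len < V.len}

theorem GTri.letter_len_comap_zero (hT : GTri K U V h) :
    (V.letter U.len h).comap ![0] = U.vtype := by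
  obtain ⟨D, hD, -⟩ := hT 0 U.len_pos
  obtain ⟨hA, hB, -⟩ := isTri_iff.1 hD
  rw [← letter_comap_one U 0 U.len_pos, letter, letter, ← hA, ← hB, comap_pair_zero,
    comap_pair_one]

theorem GTri.letter_comap_zero (hT : GTri K U V h) (i : ℕ) (hi : i < U.len) :
    (V.letter i (hi.trans h)).comap ![0] = (U.letter i hi).comap ![0] := by
  obtain ⟨D, hD, -⟩ := hT i hi
  obtain ⟨hA, -, hC⟩ := isTri_iff.1 hD
  rw [letter, letter, ← hA, ← hC, comap_pair_zero, comap_pair_zero]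

theorem gstr_rel_iff (h : U.len < V.len) (r : L2) :
    (Gstr K).rel r U V ↔ GTri K U V h ∧ (V.letter U.len h).rel r 0 1 := by
  constructor
  · rintro (⟨_, hT, hr⟩ | ⟨h', -⟩ | ⟨rfl, -⟩)
    · exact ⟨hT, hr⟩
    · exact absurd h' h.not_gt
    · exact absurd h (lt_irrefl _)
  · rintro ⟨hT, hr⟩
    exact Or.inl ⟨h, hT, hr⟩

theorem gstr_rel_iff' (h : U.len < V.len) (r : L2) :
    (Gstr K).rel r V U ↔ GTri K U V h ∧ (V.letter U.len h).rel r 1 0 := by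
  constructor
  · rintro (⟨h', -⟩ | ⟨_, hT, hr⟩ | ⟨rfl, -⟩)
    · exact absurd h' h.not_gt
    · exact ⟨hT, hr⟩
    · exact absurd h (lt_irrefl _)
  · rintro ⟨hT, hr⟩
    exact Or.inr (Or.inl ⟨h, hT, hr⟩)

theorem len_ne_of_gstr_rel {r : L2} (hne : U ≠ V) (hr : (Gstr K).rel r U V) :
    U.len ≠ V.len := by
  rcases hr with ⟨h', -⟩ | ⟨h', -⟩ | ⟨heq, -⟩
  exacts [h'.ne, h'.ne', (hne heq).elim]

theorem len_ne_of_gstr_adj (hadj : (Gstr K).Adj U V) : U.len ≠ V.len := by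
  obtain ⟨hne, r, hr | hr⟩ := hadj
  exacts [len_ne_of_gstr_rel hne hr, (len_ne_of_gstr_rel hne.symm hr).symm]

theorem gtri_of_gstr_adj (h : U.len < V.len) (hadj : (Gstr K).Adj U V) : GTri K U V h := by
  obtain ⟨-, r, hr | hr⟩ := hadj
  exacts [((gstr_rel_iff h r).1 hr).1, ((gstr_rel_iff' h r).1 hr).1]

theorem gstr_comap_single (hU : (∃ V h, GTri K U V h) ∨ ∃ V h, GTri K V U h) :
    (Gstr K).comap ![U] = U.vtype := by
  have short {V : GVert K} {h : U.len < V.len} (hT : GTri K U V h) :=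
    GTri.letter_len_comap_zero hT
  have long {V : GVert K} (h : V.len < U.len) := U.letter_comap_one V.len h
  ext r i j <;> fin_cases i <;> try fin_cases j
  · constructor
    · rintro (⟨V, h, hT, hu⟩ | ⟨V, h, -, hu⟩)
      exacts [(unary_iff_of_comap_eq (short hT) r 0).1 hu,
        (unary_iff_of_comap_eq (long h) r 0).1 hu]
    · intro hu
      rcases hU with ⟨V, h, hT⟩ | ⟨V, h, hT⟩
      exacts [Or.inl ⟨V, h, hT, (unary_iff_of_comap_eq (short hT) r 0).2 hu⟩,
        Or.inr ⟨V, h, hT, (unary_iff_of_comap_eq (long h) r 0).2 hu⟩]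
  · constructor
    · rintro (⟨h, -⟩ | ⟨h, -⟩ | ⟨-, ⟨V, h, hT, hu⟩ | ⟨V, h, -, hu⟩⟩)
      · exact absurd h (lt_irrefl _)
      · exact absurd h (lt_irrefl _)
      · exact (rel_iff_of_comap_eq (short hT) r 0 0).1 hu
      · exact (rel_iff_of_comap_eq (long h) r 0 0).1 hu
    · intro hu
      rcases hU with ⟨V, h, hT⟩ | ⟨V, h, hT⟩
      · exact Or.inr (Or.inr
          ⟨rfl, Or.inl ⟨V, h, hT, (rel_iff_of_comap_eq (short hT) r 0 0).2 hu⟩⟩)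
      · exact Or.inr (Or.inr
          ⟨rfl, Or.inr ⟨V, h, hT, (rel_iff_of_comap_eq (long h) r 0 0).2 hu⟩⟩)

theorem gstr_comap_single_of_adj (hadj : (Gstr K).Adj U V) : (Gstr K).comap ![U] = U.vtype := by
  rcases (len_ne_of_gstr_adj hadj).lt_or_gt with h | h
  exacts [gstr_comap_single (Or.inl ⟨V, h, gtri_of_gstr_adj h hadj⟩),
    gstr_comap_single (Or.inr ⟨V, h, gtri_of_gstr_adj h hadj.symm⟩)]

theorem GTri.gstr_comap_pair (hT : GTri K U V h) :
    (Gstr K).comap ![U, V] = V.letter U.len h := by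
  refine ext_pair ?_ ?_ (fun r => (gstr_rel_iff h r).trans (and_iff_right hT))
    (fun r => (gstr_rel_iff' h r).trans (and_iff_right hT))
  · rw [comap_pair_zero, gstr_comap_single (Or.inl ⟨V, h, hT⟩), GTri.letter_len_comap_zero hT]
  · rw [comap_pair_one, gstr_comap_single (Or.inr ⟨U, h, hT⟩), letter_comap_one]

/-- The type of the point `0` of the letter `U_m`, or of `U` itself when `|U| ≤ m`. By (A2) it
does not change along edges of `G` between words of length at least `m`. -/
def levelType (U : GVert K) (m : ℕ) : Str L1 L2 (Fin 1) :=
  if h : m < U.len then (U.letter m h).comap ![0] else U.vtype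

theorem GTri.levelType_eq (hT : GTri K U V h) {m : ℕ} (hm : m ≤ U.len) :
    U.levelType m = V.levelType m := by
  rw [levelType, levelType, dif_pos (hm.trans_lt h)]
  rcases hm.lt_or_eq with hm | rfl
  · rw [dif_pos hm, GTri.letter_comap_zero hT m hm]
  · rw [dif_neg (lt_irrefl _), GTri.letter_len_comap_zero hT]

theorem levelType_eq_of_gstr_adj (hadj : (Gstr K).Adj U V) {m : ℕ} (hU : m ≤ U.len)
    (hV : m ≤ V.len) : U.levelType m = V.levelType m := by
  rcases (len_ne_of_gstr_adj hadj).lt_or_gt with h | h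
  exacts [GTri.levelType_eq (gtri_of_gstr_adj h hadj) hU,
    (GTri.levelType_eq (gtri_of_gstr_adj h hadj.symm) hV).symm]

end GVert

open GVert

theorem Str.IsInducedCycle.levelType_eq {L1 L2 W : Type} {K : Str L1 L2 W} {ℓ m : ℕ}
    {v : ZMod ℓ → GVert K} (hv : (Gstr K).IsInducedCycle ℓ v) (hm : ∀ i, m ≤ (v i).len)
    (i j : ZMod ℓ) : (v i).levelType m = (v j).levelType m := by
  have : NeZero ℓ := ⟨by have := hv.1.1; omega⟩
  refine ZMod.forall_of_add_one (P := fun i => (v i).levelType m = (v j).levelType m) rfl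
    (fun i hi => ?_) i
  exact (levelType_eq_of_gstr_adj (hv.1.2.2 i) (hm i) (hm _)).symm.trans hi

def chordStr {L1 L2 W : Type} (K : Str L1 L2 W) (m : ℕ) : Str L1 L2 (GVert K) where
  unary := (Gstr K).unary
  rel r U V := (Gstr K).rel r U V ∨
    (U.len = m ∧ ∃ h : m < V.len, (V.letter m h).rel r 0 1) ∨
    (V.len = m ∧ ∃ h : m < U.len, (U.letter m h).rel r 1 0)

section chordStr

variable {L1 L2 W : Type} {K : Str L1 L2 W} {m : ℕ} {U V : GVert K}

theorem chordStr_comap_single (U : GVert K) :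
    (chordStr K m).comap ![U] = (Gstr K).comap ![U] := by
  ext r i j <;> fin_cases i <;> try fin_cases j
  · rfl
  · exact or_iff_left (by rintro (⟨rfl, h, -⟩ | ⟨rfl, h, -⟩) <;> exact lt_irrefl _ h)

theorem chordStr_adj_of_gstr_adj (hadj : (Gstr K).Adj U V) : (chordStr K m).Adj U V :=
  ⟨hadj.1, hadj.2.imp fun _ => Or.imp Or.inl Or.inl⟩

theorem chordStr_rel_iff_of_adj (hadj : (Gstr K).Adj U V) (r : L2) :
    (chordStr K m).rel r U V ↔ (Gstr K).rel r U V := by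
  refine ⟨?_, Or.inl⟩
  rintro (hr | ⟨rfl, h, hr⟩ | ⟨rfl, h, hr⟩)
  · exact hr
  · exact (gstr_rel_iff h r).2 ⟨gtri_of_gstr_adj h hadj, hr⟩
  · exact (gstr_rel_iff' h r).2 ⟨gtri_of_gstr_adj h hadj.symm, hr⟩

theorem chordStr_comap_of_adj (hadj : (Gstr K).Adj U V) :
    (chordStr K m).comap ![U, V] = (Gstr K).comap ![U, V] :=
  ext_pair (by rw [comap_pair_zero, comap_pair_zero, chordStr_comap_single])
    (by rw [comap_pair_one, comap_pair_one, chordStr_comap_single])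
    (chordStr_rel_iff_of_adj hadj) (chordStr_rel_iff_of_adj hadj.symm)

theorem chordStr_comap_of_len {U' V' : GVert K} (hU : U.len = m) (h : m < V.len)
    (hU' : (Gstr K).Adj U U') (hV' : (Gstr K).Adj V V') (hlev : U.levelType m = V.levelType m) :
    (chordStr K m).comap ![U, V] = V.letter m h := by
  refine ext_pair ?_ ?_ (fun r => ⟨?_, fun hr => Or.inr (Or.inl ⟨hU, h, hr⟩)⟩)
    (fun r => ⟨?_, fun hr => Or.inr (Or.inr ⟨hU, h, hr⟩)⟩)
  · rw [comap_pair_zero, chordStr_comap_single, gstr_comap_single_of_adj hU']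
    rwa [levelType, dif_neg hU.not_gt, levelType, dif_pos h] at hlev
  · rw [comap_pair_one, chordStr_comap_single, gstr_comap_single_of_adj hV', letter_comap_one]
  · rintro (hr | ⟨-, _, hr⟩ | ⟨hV, -⟩)
    · subst hU
      exact ((gstr_rel_iff h r).1 hr).2
    · exact hr
    · exact absurd hV h.ne'
  · rintro (hr | ⟨hV, -⟩ | ⟨-, _, hr⟩)
    · subst hU
      exact ((gstr_rel_iff' h r).1 hr).2
    · exact absurd hV h.ne'
    · exact hr

theorem chordStr_adj_cases (hadj : (chordStr K m).Adj U V) :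
    (Gstr K).Adj U V ∨ (U.len = m ∧ m < V.len) ∨ (V.len = m ∧ m < U.len) := by
  obtain ⟨hne, r,
    (hr | ⟨hU, h, -⟩ | ⟨hV, h, -⟩) | (hr | ⟨hV, h, -⟩ | ⟨hU, h, -⟩)⟩ := hadj
  exacts [Or.inl ⟨hne, r, Or.inl hr⟩, Or.inr (Or.inl ⟨hU, h⟩), Or.inr (Or.inr ⟨hV, h⟩),
    Or.inl ⟨hne, r, Or.inr hr⟩, Or.inr (Or.inr ⟨hV, h⟩), Or.inr (Or.inl ⟨hU, h⟩)]

theorem len_ne_of_chordStr_adj (hadj : (chordStr K m).Adj U V) : U.len ≠ V.len := by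
  rcases chordStr_adj_cases hadj with hG | ⟨hU, h⟩ | ⟨hV, h⟩
  exacts [len_ne_of_gstr_adj hG, by omega, by omega]

theorem not_chordStr_adj (hU : U.len = m) (hV : V.len = m) : ¬ (chordStr K m).Adj U V :=
  fun hadj => len_ne_of_chordStr_adj hadj (hU.trans hV.symm)

theorem lt_len_of_chordStr_adj (hU : U.len = m) (hV : m ≤ V.len)
    (hadj : (chordStr K m).Adj U V) : m < V.len :=
  hV.lt_of_ne' fun h => not_chordStr_adj hU h hadj

theorem chordStr_adj_of_len (hK : K.Irred) (hU : U.len = m) (h : m < V.len) :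
    (chordStr K m).Adj U V := by
  obtain ⟨r, hr⟩ := (letter_isEmb V m h).choose_spec.exists_rel hK
  refine ⟨fun hUV => h.ne' (hUV ▸ hU), r, ?_⟩
  exact hr.imp (fun hr => Or.inr (Or.inl ⟨hU, h, hr⟩))
    (fun hr => Or.inr (Or.inr ⟨hU, h, hr⟩))

end chordStr

section cycle

variable {L1 L2 W : Type} {K : Str L1 L2 W} {ℓ m : ℕ} {v : ZMod ℓ → GVert K}

theorem chordStr_comap_of_cycle (hv : (Gstr K).IsInducedCycle ℓ v) (hm : ∀ i, m ≤ (v i).len)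
    {i j : ZMod ℓ} (hi : (v i).len = m) (hj : m < (v j).len) :
    (chordStr K m).comap ![v i, v j] = (v j).letter m hj :=
  chordStr_comap_of_len hi hj (hv.1.2.2 i) (hv.1.2.2 j) (hv.levelType_eq hm i j)

theorem chordStr_smallIrredEmbed (hv : (Gstr K).IsInducedCycle ℓ v)
    (hm : ∀ i, m ≤ (v i).len) : ((chordStr K m).comap v).SmallIrredEmbed K 2 := by
  refine smallIrredEmbed_two (fun i => ?_) (fun i j hij => ?_)
  · obtain ⟨e, he⟩ := letter_isEmb (v i) 0 (len_pos _)
    refine ⟨e 1, ?_⟩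
    rw [comap_comap_single, chordStr_comap_single, gstr_comap_single_of_adj (hv.1.2.2 i), vtype,
      ← (isEmb_iff.1 he).2, comap_comap_single]
  have hletter (i j : ZMod ℓ) (hadj : (chordStr K m).Adj (v i) (v j))
      (hlt : (v i).len < (v j).len) :
      ∃ e : Fin 2 → W, ((chordStr K m).comap ![v i, v j]).IsEmb K e := by
    rcases chordStr_adj_cases hadj with hG | ⟨hi, hj⟩ | ⟨hj, -⟩
    · rw [chordStr_comap_of_adj hG, GTri.gstr_comap_pair (gtri_of_gstr_adj hlt hG)]
      exact letter_isEmb _ _ _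
    · rw [chordStr_comap_of_cycle hv hm hi hj]
      exact letter_isEmb _ _ _
    · exact absurd (hm i) (by omega)
  rw [adj_comap_iff hv.1.2.1] at hij
  rw [comap_comap_pair]
  rcases (len_ne_of_chordStr_adj hij).lt_or_gt with h | h
  exacts [hletter i j hij h, exists_isEmb_pair_swap (hletter j i hij.symm h)]

theorem exists_triangle {z a b : GVert K} (hlt : a.len < b.len) (hab : (Gstr K).Adj a b)
    (ha : m < a.len) (hza : (chordStr K m).comap ![z, a] = a.letter m ha)
    (hzb : (chordStr K m).comap ![z, b] = b.letter m (ha.trans hlt)) :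
    ∃ φ : Fin 3 → W, Function.Injective φ ∧
      K.comap ![φ 0, φ 1] = (chordStr K m).comap ![z, a] ∧
      K.comap ![φ 1, φ 2] = (chordStr K m).comap ![a, b] ∧
      K.comap ![φ 0, φ 2] = (chordStr K m).comap ![z, b] := by
  have hT := gtri_of_gstr_adj hlt hab
  obtain ⟨D, hD, φ, hφ⟩ := hT m ha
  obtain ⟨hA, hB, hC⟩ := isTri_iff.1 hD
  obtain ⟨hφ, hKD⟩ := isEmb_iff.1 hφ
  refine ⟨φ, hφ, ?_, ?_, ?_⟩
  · rw [← comap_comap_pair, hKD, hA, hza]; rfl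
  · rw [← comap_comap_pair, hKD, hB, chordStr_comap_of_adj hab, GTri.gstr_comap_pair hT]; rfl
  · rw [← comap_comap_pair, hKD, hC, hzb]; rfl

theorem chordStr_cycle_length (hK : K.Irred) (hv : (Gstr K).IsInducedCycle ℓ v)
    (hm : ∀ i, m ≤ (v i).len) {n : ℕ} {w : ZMod n → ZMod ℓ}
    (hw : ((chordStr K m).comap v).IsInducedCycle n w) (h0 : (v (w 0)).len = m) :
    n = 3 ∨ n = 4 := by
  by_contra hn
  have hn5 : 5 ≤ n := by have := hw.1.1; omega
  have hmin (k : ℕ) (hk : 2 ≤ k) (hkn : k + 2 ≤ n) : (v (w k)).len = m := by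
    by_contra hne
    refine hw.not_adj_add hk hkn 0 ?_
    rw [adj_comap_iff hv.1.2.1, zero_add]
    exact chordStr_adj_of_len hK h0 ((hm _).lt_of_ne' hne)
  have h2 := hmin 2 le_rfl (by omega)
  have h3 := hmin 3 (by omega) (by omega)
  simp only [Nat.cast_ofNat] at h2 h3
  have hadj := hw.1.2.2 2
  rw [adj_comap_iff hv.1.2.1, show (2 : ZMod n) + 1 = 3 by norm_num] at hadj
  exact not_chordStr_adj h2 h3 hadj

theorem chordStr_triangle_completion (hK : K.Irred) (hv : (Gstr K).IsInducedCycle ℓ v)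
    (hm : ∀ i, m ≤ (v i).len) {w : ZMod 3 → ZMod ℓ}
    (hw : ((chordStr K m).comap v).IsInducedCycle 3 w) (h0 : (v (w 0)).len = m) :
    ∃ f : Set.range w → W,
      (((chordStr K m).comap v).Induced (Set.range w)).IsCompletion K f := by
  have hadj (t : ZMod 3) := (adj_comap_iff hv.1.2.1).1 (hw.1.2.2 t)
  have ha : m < (v (w 1)).len := lt_len_of_chordStr_adj h0 (hm _) (hadj 0)
  have hb : m < (v (w 2)).len := lt_len_of_chordStr_adj h0 (hm _) (hadj 2).symm
  have hab : (Gstr K).Adj (v (w 1)) (v (w 2)) := by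
    rcases chordStr_adj_cases (hadj 1) with h | ⟨h, -⟩ | ⟨h, -⟩
    exacts [h, absurd h ha.ne', absurd h hb.ne']
  have hza {j : ZMod ℓ} (hj : m < (v j).len) := chordStr_comap_of_cycle hv hm h0 hj
  rcases (len_ne_of_gstr_adj hab).lt_or_gt with hlt | hlt
  · obtain ⟨φ, hφ, h01, h12, h02⟩ := exists_triangle hlt hab ha (hza ha) (hza hb)
    refine hw.exists_completion (ψ := φ) hK hφ fun t => ?_
    rw [comap_comap_pair]
    fin_cases t
    exacts [h01, h12, comap_swap_eq h02]
  · obtain ⟨φ, hφ, h01, h12, h02⟩ := exists_triangle hlt hab.symm hb (hza hb) (hza ha)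
    refine hw.exists_completion (ψ := φ ∘ ![0, 2, 1]) hK
      (hφ.comp (f := ![0, 2, 1]) (by decide)) fun t => ?_
    rw [comap_comap_pair]
    fin_cases t
    exacts [h02, comap_swap_eq h12, comap_swap_eq h01]

theorem chordStr_square_completion [Countable W] (hK : K.Irred) (hyp : CompletionHyp K)
    (hv : (Gstr K).IsInducedCycle ℓ v) (hm : ∀ i, m ≤ (v i).len) {w : ZMod 4 → ZMod ℓ}
    (hw : ((chordStr K m).comap v).IsInducedCycle 4 w) (h0 : (v (w 0)).len = m) :
    ∃ f : Set.range w → W,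
      (((chordStr K m).comap v).Induced (Set.range w)).IsCompletion K f := by
  have hadj (t : ZMod 4) := (adj_comap_iff hv.1.2.1).1 (hw.1.2.2 t)
  have ha : m < (v (w 1)).len := lt_len_of_chordStr_adj h0 (hm _) (hadj 0)
  have hb : m < (v (w 3)).len := lt_len_of_chordStr_adj h0 (hm _) (hadj 3).symm
  have hz' : (v (w 2)).len = m := by
    by_contra hne
    exact hw.not_adj_add (k := 2) le_rfl le_rfl 0
      ((adj_comap_iff hv.1.2.1).2 (chordStr_adj_of_len hK h0 ((hm _).lt_of_ne' hne)))
  have hlev := hv.levelType_eq hm (w 1) (w 3)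
  rw [levelType, dif_pos ha, levelType, dif_pos hb] at hlev
  obtain ⟨ψ, hψ, h01, h21, h23, h03⟩ :=
    exists_square hK hyp (letter_isEmb _ m ha) (letter_isEmb _ m hb) hlev
  refine hw.exists_completion (ψ := ψ) hK hψ fun t => ?_
  rw [comap_comap_pair]
  fin_cases t
  exacts [h01.trans (chordStr_comap_of_cycle hv hm h0 ha).symm,
    comap_swap_eq (h21.trans (chordStr_comap_of_cycle hv hm hz' ha).symm),
    h23.trans (chordStr_comap_of_cycle hv hm hz' hb).symm,
    comap_swap_eq (h03.trans (chordStr_comap_of_cycle hv hm h0 hb).symm)]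

end cycle

theorem chordStr_cycleCompletes {L1 L2 W : Type} [Countable W] {K : Str L1 L2 W} {ℓ m : ℕ}
    {v : ZMod ℓ → GVert K} (hK : K.Irred) (hyp : CompletionHyp K)
    (hv : (Gstr K).IsInducedCycle ℓ v) (hm : ∀ i, m ≤ (v i).len) {i₀ : ZMod ℓ}
    (hi₀ : (v i₀).len = m) : ((chordStr K m).comap v).CycleCompletes K := by
  intro n w hw
  obtain ⟨t₀, ht₀⟩ : ∃ t, (v (w t)).len = m := by
    -- otherwise `v ∘ w` is a cycle of `G` inside the induced cycle `v`, hence all of `v`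
    by_contra! hno
    have hG : (Gstr K).IsCycle n (v ∘ w) := by
      refine ⟨hw.1.1, hv.1.2.1.comp hw.1.2.1, fun t => ?_⟩
      rcases chordStr_adj_cases ((adj_comap_iff hv.1.2.1).1 (hw.1.2.2 t))
        with h | ⟨h, -⟩ | ⟨h, -⟩
      exacts [h, (hno t h).elim, (hno _ h).elim]
    obtain ⟨t, ht⟩ :=
      hv.range_subset_of_isCycle hG (Set.range_comp_subset_range w v) ⟨i₀, rfl⟩
    exact hno t (congrArg len ht ▸ hi₀)
  obtain ⟨w', hw', hrange, h0⟩ := hw.exists_rotate t₀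
  rw [← hrange]
  replace ht₀ : (v (w' 0)).len = m := h0 ▸ ht₀
  rcases chordStr_cycle_length hK hv hm hw' ht₀ with rfl | rfl
  exacts [chordStr_triangle_completion hK hv hm hw' ht₀,
    chordStr_square_completion hK hyp hv hm hw' ht₀]

theorem G_cycles_complete_general {L1 L2 WK : Type} [Countable WK]
    (K : Str L1 L2 WK) (hK : K.Irred) (hyp : CompletionHyp K) :
    (Gstr K).CycleCompletes K := by
  intro ℓ v hv
  have : NeZero ℓ := ⟨by have := hv.1.1; omega⟩
  obtain ⟨i₀, hi₀⟩ := Finite.exists_min fun i => (v i).len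
  obtain ⟨f, hf⟩ := hyp (ZMod ℓ) ((chordStr K (v i₀).len).comap v)
    (chordStr_cycleCompletes hK hyp hv hi₀ rfl) (chordStr_smallIrredEmbed hv hi₀)
  refine hv.exists_completion hK hf.2.1 fun t => ?_
  have hadj := hv.1.2.2 t
  rw [hf.comap_pair ((adj_comap_iff hv.1.2.1).2 (chordStr_adj_of_gstr_adj hadj)),
    comap_comap_pair, chordStr_comap_of_adj hadj]

/-- Every induced cycle in the word structure `G` has a completion to `K`. -/
theorem G_cycles_complete {L1 L2 WK : Type} [Finite L1] [Finite L2]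
    [Countable WK] [Infinite WK]
    (K : Str L1 L2 WK) (hK : K.Irred) (hyp : CompletionHyp K) :
    (Gstr K).CycleCompletes K :=
  G_cycles_complete_general K hK hyp
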